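/- ∑_{i=0}^{⌊n/2⌋} C(n, 2i) = 2^{n−1} for n ≥ 1, i.e., the total number of antichains in the poset {(x,y) : 1 ≤ y ≤ x ≤ n−1} under componentwise order is 2^{n−1}. -/
import Mathlib


/-- The poset of integer points (x,y) with 1 ≤ y ≤ x ≤ n−1. -/
def trianglePoset (n : ℕ) : Finset (ℕ × ℕ) :=
  (Finset.Icc 1 (n - 1) ×ˢ Finset.Icc 1 (n - 1)).filter (fun p => p.2 ≤ p.1)

/-- A finite set of lattice points is an antichain under the componentwise order. -/
def IsLatticeAntichain (A : Finset (ℕ × ℕ)) : Prop :=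
  ∀ p ∈ A, ∀ q ∈ A, p ≠ q → ¬(p.1 ≤ q.1 ∧ p.2 ≤ q.2)

instance : DecidablePred IsLatticeAntichain := fun A => by
  unfold IsLatticeAntichain; infer_instance

/- ### Part 1 : the binomial sum -/

lemma even_choose_sum (n : ℕ) (hn : 1 ≤ n) :
    (∑ i ∈ Finset.range (n / 2 + 1), n.choose (2 * i)) = 2 ^ (n - 1) := by
  have hre : (∑ i ∈ Finset.range (n / 2 + 1), n.choose (2 * i))
      = ∑ k ∈ (Finset.range (n + 1)).filter (fun k => Even k), n.choose k := by
    refine Finset.sum_nbij (fun i => 2 * i) ?_ ?_ ?_ ?_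
    · intro i hi
      simp only [Finset.mem_filter, Finset.mem_range] at *
      exact ⟨by omega, even_two_mul i⟩
    · intro a _ b _ h
      simpa using (by omega : 2 * a = 2 * b → a = b) h
    · intro k hk
      simp only [Finset.coe_filter, Finset.mem_range, Set.mem_setOf_eq] at hk
      obtain ⟨hk1, j, hj⟩ := hk
      refine ⟨j, ?_, by simp; omega⟩
      simp only [Finset.mem_coe, Finset.mem_range]; omega
    · intros; rfl
  have halt := Int.alternating_sum_range_choose_of_ne (by omega : n ≠ 0)
  set E := (Finset.range (n + 1)).filter (fun k => Even k) with hE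
  set O := (Finset.range (n + 1)).filter (fun k => ¬ Even k) with hO
  have hsum : ∑ k ∈ E, (n.choose k : ℤ) + ∑ k ∈ O, (n.choose k : ℤ) = 2 ^ n := by
    rw [Finset.sum_filter_add_sum_filter_not]
    exact_mod_cast Nat.sum_range_choose n
  have hdiff : ∑ k ∈ E, (n.choose k : ℤ) - ∑ k ∈ O, (n.choose k : ℤ) = 0 := by
    have he : ∀ k ∈ E, (-1:ℤ)^k * n.choose k = (n.choose k : ℤ) := by
      intro k hk
      have hk' : Even k := (Finset.mem_filter.mp hk).2
      rw [hk'.neg_one_pow, one_mul]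
    have ho : ∀ k ∈ O, (-1:ℤ)^k * n.choose k = -(n.choose k : ℤ) := by
      intro k hk
      have hk' : Odd k := Nat.not_even_iff_odd.mp (Finset.mem_filter.mp hk).2
      rw [hk'.neg_one_pow, neg_one_mul]
    rw [← halt, ← Finset.sum_filter_add_sum_filter_not (Finset.range (n+1)) (fun k => Even k)
      (fun i => (-1:ℤ)^i * n.choose i), Finset.sum_congr rfl he, Finset.sum_congr rfl ho,
      Finset.sum_neg_distrib]
    ring
  have h2z : (2:ℤ) * ∑ k ∈ E, (n.choose k : ℤ) = 2 ^ n := by linarith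
  have h2 : ∑ k ∈ E, n.choose k = 2 ^ (n - 1) := by
    have h4 : (2:ℤ) * ∑ k ∈ E, (n.choose k : ℤ) = 2 * 2 ^ (n-1) := by
      rw [h2z, ← pow_succ']
      congr 1
      omega
    have h3 : (∑ k ∈ E, (n.choose k : ℤ)) = 2 ^ (n-1) := by linarith
    exact_mod_cast h3
  rw [hre, h2]

/- ### Part 2 : counting antichains -/

lemma mem_triangle {n : ℕ} {p : ℕ × ℕ} :
    p ∈ trianglePoset n ↔ 1 ≤ p.2 ∧ p.2 ≤ p.1 ∧ p.1 ≤ n - 1 := by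
  simp only [trianglePoset, Finset.mem_filter, Finset.mem_product, Finset.mem_Icc]
  omega

/-- the map from antichains to even subsets of `[1, n]` -/
def fmap (A : Finset (ℕ × ℕ)) : Finset ℕ :=
  A.image Prod.snd ∪ A.image (fun p => p.1 + 1)

lemma anti_subset {A B : Finset (ℕ × ℕ)} (h : B ⊆ A) (hA : IsLatticeAntichain A) :
    IsLatticeAntichain B :=
  fun p hp q hq => hA p (h hp) q (h hq)

section
variable {n : ℕ} {A : Finset (ℕ × ℕ)} (hA : A ⊆ trianglePoset n) (hAc : IsLatticeAntichain A)
include hA hAc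

lemma snd_le_fst : ∀ p ∈ A, ∀ q ∈ A, p.2 ≤ q.1 := by
  intro p hp q hq
  by_contra h
  have h1 := mem_triangle.mp (hA hp)
  have h2 := mem_triangle.mp (hA hq)
  have hne : q ≠ p := by
    intro e; subst e; omega
  exact hAc q hq p hp hne ⟨by omega, by omega⟩

omit hA in
lemma snd_injOn : Set.InjOn Prod.snd (A : Set (ℕ × ℕ)) := by
  intro p hp q hq h
  by_contra hne
  rcases le_total p.1 q.1 with h1 | h1
  · exact hAc p hp q hq hne ⟨h1, le_of_eq h⟩
  · exact hAc q hq p hp (Ne.symm hne) ⟨h1, le_of_eq h.symm⟩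

omit hA in
lemma fst_injOn : Set.InjOn (fun p : ℕ × ℕ => p.1 + 1) (A : Set (ℕ × ℕ)) := by
  intro p hp q hq h
  simp only at h
  by_contra hne
  rcases le_total p.2 q.2 with h1 | h1
  · exact hAc p hp q hq hne ⟨by omega, h1⟩
  · exact hAc q hq p hp (Ne.symm hne) ⟨by omega, h1⟩

lemma fmap_disj : Disjoint (A.image Prod.snd) (A.image (fun p => p.1 + 1)) := by
  rw [Finset.disjoint_left]
  intro a ha hb
  obtain ⟨p, hp, hpa⟩ := Finset.mem_image.mp ha
  obtain ⟨q, hq, hqa⟩ := Finset.mem_image.mp hb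
  have := snd_le_fst hA hAc p hp q hq
  omega

lemma fmap_card : (fmap A).card = 2 * A.card := by
  rw [fmap, Finset.card_union_of_disjoint (fmap_disj hA hAc),
    Finset.card_image_of_injOn (snd_injOn hAc),
    Finset.card_image_of_injOn (fst_injOn hAc)]
  omega

omit hAc in
lemma fmap_subset (hn : 1 ≤ n) : fmap A ⊆ Finset.Icc 1 n := by
  intro a ha
  rw [fmap, Finset.mem_union] at ha
  rw [Finset.mem_Icc]
  rcases ha with h | h <;> obtain ⟨p, hp, hpa⟩ := Finset.mem_image.mp h <;>
    have := mem_triangle.mp (hA hp) <;> omega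

/-- the "corner" point: max fst together with min snd -/
lemma exists_corner (hne : A.Nonempty) :
    ∃ q ∈ A, ∀ a ∈ fmap A, a ≤ q.1 + 1 ∧ q.2 ≤ a := by
  obtain ⟨q, hq, hmax⟩ := Finset.exists_max_image A Prod.fst hne
  refine ⟨q, hq, ?_⟩
  have hminsnd : ∀ p ∈ A, q.2 ≤ p.2 := by
    intro p hp
    by_contra h
    have hne2 : p ≠ q := by
      intro e; subst e; omega
    exact hAc p hp q hq hne2 ⟨hmax p hp, by omega⟩
  intro a ha
  rw [fmap, Finset.mem_union] at ha
  rcases ha with h | h <;> obtain ⟨p, hp, hpa⟩ := Finset.mem_image.mp h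
  · have h1 := snd_le_fst hA hAc p hp q hq
    have h2 := hminsnd p hp
    omega
  · have h1 := hmax p hp
    have h2 := hminsnd p hp
    have h3 := (mem_triangle.mp (hA hp)).2.1
    omega

lemma fmap_erase {q : ℕ × ℕ} (hq : q ∈ A) :
    fmap (A.erase q) = ((fmap A).erase (q.1 + 1)).erase q.2 := by
  ext a
  simp only [fmap, Finset.mem_union, Finset.mem_image, Finset.mem_erase]
  constructor
  · rintro (⟨p, ⟨hpq, hp⟩, rfl⟩ | ⟨p, ⟨hpq, hp⟩, rfl⟩)
    · refine ⟨?_, ?_, Or.inl ⟨p, hp, rfl⟩⟩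
      · intro h; exact hpq (snd_injOn hAc hp hq h)
      · have := snd_le_fst hA hAc p hp q hq; omega
    · refine ⟨?_, ?_, Or.inr ⟨p, hp, rfl⟩⟩
      · have := snd_le_fst hA hAc q hq p hp; omega
      · intro h; exact hpq (fst_injOn hAc hp hq h)
  · rintro ⟨h2, h1, (⟨p, hp, rfl⟩ | ⟨p, hp, rfl⟩)⟩
    · exact Or.inl ⟨p, ⟨fun e => h2 (by rw [e]), hp⟩, rfl⟩
    · exact Or.inr ⟨p, ⟨fun e => h1 (by rw [e]), hp⟩, rfl⟩

end

lemma fmap_injectivity {n : ℕ} : ∀ (k : ℕ) (A B : Finset (ℕ × ℕ)), A.card ≤ k →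
    A ⊆ trianglePoset n → IsLatticeAntichain A →
    B ⊆ trianglePoset n → IsLatticeAntichain B → fmap A = fmap B → A = B := by
  intro k
  induction k with
  | zero =>
    intro A B hcard hA hAc hB hBc hf
    have hA0 : A = ∅ := Finset.card_eq_zero.mp (by omega)
    subst hA0
    have : (fmap B).card = 0 := by
      rw [← hf]; simp [fmap]
    have := fmap_card hB hBc
    have : B.card = 0 := by omega
    rw [Finset.card_eq_zero.mp this]
  | succ k ih =>
    intro A B hcard hA hAc hB hBc hf
    rcases A.eq_empty_or_nonempty with rfl | hne
    · have : (fmap B).card = 0 := by rw [← hf]; simp [fmap]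
      have := fmap_card hB hBc
      have : B.card = 0 := by omega
      rw [Finset.card_eq_zero.mp this]
    · have hBne : B.Nonempty := by
        rcases B.eq_empty_or_nonempty with rfl | h
        · exfalso
          have h1 := fmap_card hA hAc
          have : (fmap A).card = 0 := by rw [hf]; simp [fmap]
          have := Finset.card_pos.mpr hne
          omega
        · exact h
      obtain ⟨q, hqA, hq⟩ := exists_corner hA hAc hne
      obtain ⟨r, hrB, hr⟩ := exists_corner hB hBc hBne
      have hq1f : q.1 + 1 ∈ fmap A := by
        simp only [fmap, Finset.mem_union, Finset.mem_image]
        exact Or.inr ⟨q, hqA, rfl⟩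
      have hq2f : q.2 ∈ fmap A := by
        simp only [fmap, Finset.mem_union, Finset.mem_image]
        exact Or.inl ⟨q, hqA, rfl⟩
      have hr1f : r.1 + 1 ∈ fmap A := by
        rw [hf]; simp only [fmap, Finset.mem_union, Finset.mem_image]
        exact Or.inr ⟨r, hrB, rfl⟩
      have hr2f : r.2 ∈ fmap A := by
        rw [hf]; simp only [fmap, Finset.mem_union, Finset.mem_image]
        exact Or.inl ⟨r, hrB, rfl⟩
      have e1 : q.1 = r.1 := by
        have h1 := (hq (r.1+1) hr1f).1
        have h2 := (hr (q.1+1) (hf ▸ hq1f)).1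
        omega
      have e2 : q.2 = r.2 := by
        have h1 := (hq (r.2) hr2f).2
        have h2 := (hr (q.2) (hf ▸ hq2f)).2
        omega
      have hqr : q = r := Prod.ext e1 e2
      subst hqr
      have hferase : fmap (A.erase q) = fmap (B.erase q) := by
        rw [fmap_erase hA hAc hqA, fmap_erase hB hBc hrB, hf]
      have heq : A.erase q = B.erase q := by
        refine ih (A.erase q) (B.erase q) ?_ ?_ (anti_subset (Finset.erase_subset q A) hAc)
          ?_ (anti_subset (Finset.erase_subset q B) hBc) hferase
        · have := Finset.card_erase_of_mem hqA; omega
        · exact (Finset.erase_subset q A).trans hA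
        · exact (Finset.erase_subset q B).trans hB
      have : insert q (A.erase q) = insert q (B.erase q) := by rw [heq]
      rwa [Finset.insert_erase hqA, Finset.insert_erase hrB] at this

lemma fmap_surjectivity {n : ℕ} (hn : 1 ≤ n) : ∀ (k : ℕ) (S : Finset ℕ), S.card ≤ k →
    S ⊆ Finset.Icc 1 n → Even S.card →
    ∃ A, A ⊆ trianglePoset n ∧ IsLatticeAntichain A ∧ fmap A = S := by
  intro k
  induction k with
  | zero =>
    intro S hcard _ _
    have : S = ∅ := Finset.card_eq_zero.mp (by omega)
    subst this
    exact ⟨∅, by simp, fun p hp => by simp at hp, by simp [fmap]⟩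
  | succ k ih =>
    intro S hcard hS hev
    rcases S.eq_empty_or_nonempty with rfl | hne
    · exact ⟨∅, by simp, fun p hp => by simp at hp, by simp [fmap]⟩
    · have hcard2 : 2 ≤ S.card := by
        rcases hev with ⟨m, hm⟩
        have := Finset.card_pos.mpr hne
        omega
      set a := S.min' hne with ha
      set b := S.max' hne with hb
      have hab : a < b := S.min'_lt_max'_of_card (by omega)
      have haS : a ∈ S := S.min'_mem hne
      have hbS : b ∈ S := S.max'_mem hne
      set S' := (S.erase a).erase b with hS'
      have hS'sub : S' ⊆ S := (Finset.erase_subset _ _).trans (Finset.erase_subset _ _)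
      have hS'card : S'.card = S.card - 2 := by
        have hba : b ∈ S.erase a := Finset.mem_erase.mpr ⟨(by omega : b ≠ a), hbS⟩
        rw [hS', Finset.card_erase_of_mem hba, Finset.card_erase_of_mem haS]; omega
      have hS'lt : ∀ x ∈ S', a < x ∧ x < b := by
        intro x hx
        have hx1 : x ≠ b := (Finset.mem_erase.mp hx).1
        have hx2 : x ≠ a := (Finset.mem_erase.mp (Finset.mem_erase.mp hx).2).1
        have hxS : x ∈ S := hS'sub hx
        have h1 := S.min'_le x hxS
        have h2 := S.le_max' x hxS
        constructor <;> omega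
      obtain ⟨A', hA'sub, hA'c, hA'f⟩ := ih S' (by omega) (hS'sub.trans hS)
        (by rw [hS'card]; obtain ⟨m, hm⟩ := hev; exact ⟨m - 1, by omega⟩)
      have hbn : b ≤ n := (Finset.mem_Icc.mp (hS hbS)).2
      have ha1 : 1 ≤ a := (Finset.mem_Icc.mp (hS haS)).1
      set p : ℕ × ℕ := (b - 1, a) with hp
      have hpT : p ∈ trianglePoset n := by
        rw [mem_triangle, hp]
        dsimp only
        omega
      have hA'bound : ∀ q ∈ A', a < q.2 ∧ q.1 + 1 < b := by
        intro q hq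
        have h1 : q.2 ∈ S' := by
          rw [← hA'f, fmap, Finset.mem_union]
          exact Or.inl (Finset.mem_image.mpr ⟨q, hq, rfl⟩)
        have h2 : q.1 + 1 ∈ S' := by
          rw [← hA'f, fmap, Finset.mem_union]
          exact Or.inr (Finset.mem_image.mpr ⟨q, hq, rfl⟩)
        have := hS'lt _ h1
        have := hS'lt _ h2
        have h3 : q.2 ≤ q.1 := (mem_triangle.mp (hA'sub hq)).2.1
        constructor <;> omega
      have hpA' : p ∉ A' := by
        intro h
        have := hA'bound p h
        simp only [hp] at this
        omega
      refine ⟨insert p A', ?_, ?_, ?_⟩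
      · exact Finset.insert_subset hpT hA'sub
      · intro x hx y hy hxy
        rcases Finset.mem_insert.mp hx with rfl | hx <;>
          rcases Finset.mem_insert.mp hy with h | hy
        · exact absurd h.symm hxy
        · have := hA'bound y hy
          simp only [hp]
          omega
        · subst h
          have := hA'bound x hx
          simp only [hp]
          omega
        · exact hA'c x hx y hy hxy
      · have : fmap (insert p A') = insert a (insert b (fmap A')) := by
          rw [fmap, Finset.image_insert, Finset.image_insert]
          have hb1 : p.1 + 1 = b := by simp only [hp]; omega
          have hp2 : p.2 = a := rfl
          rw [hb1, hp2, Finset.insert_union, Finset.union_insert]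
          rfl
        have hba : b ∈ S.erase a := Finset.mem_erase.mpr ⟨(by omega : b ≠ a), hbS⟩
        rw [this, hA'f, hS', Finset.insert_erase hba, Finset.insert_erase haS]

/-- The number of antichains equals the number of even-cardinality subsets of `[1, n]`. -/
lemma antichain_card_eq (n : ℕ) (hn : 1 ≤ n) :
    ((trianglePoset n).powerset.filter IsLatticeAntichain).card
      = ((Finset.Icc 1 n).powerset.filter (fun S => Even S.card)).card := by
  refine Finset.card_bij (fun A _ => fmap A) ?_ ?_ ?_
  · intro A hA
    rw [Finset.mem_filter, Finset.mem_powerset] at hA ⊢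
    refine ⟨fmap_subset hA.1 hn, ?_⟩
    rw [fmap_card hA.1 hA.2]
    exact even_two_mul _
  · intro A hA B hB hf
    rw [Finset.mem_filter, Finset.mem_powerset] at hA hB
    exact fmap_injectivity A.card A B le_rfl hA.1 hA.2 hB.1 hB.2 hf
  · intro S hS
    rw [Finset.mem_filter, Finset.mem_powerset] at hS
    obtain ⟨A, h1, h2, h3⟩ := fmap_surjectivity hn S.card S le_rfl hS.1 hS.2
    exact ⟨A, Finset.mem_filter.mpr ⟨Finset.mem_powerset.mpr h1, h2⟩, h3⟩

/-- The number of even-cardinality subsets of `[1, n]` is `2 ^ (n - 1)`. -/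
lemma even_subsets_card (n : ℕ) (hn : 1 ≤ n) :
    ((Finset.Icc 1 n).powerset.filter (fun S => Even S.card)).card = 2 ^ (n - 1) := by
  have key : ((Finset.Icc 1 n).powerset.filter (fun S => Even S.card)).card
      = (Finset.Icc 1 (n - 1)).powerset.card := by
    refine Finset.card_bij (fun S _ => S.erase n) ?_ ?_ ?_
    · intro S hS
      rw [Finset.mem_filter, Finset.mem_powerset] at hS
      rw [Finset.mem_powerset]
      intro x hx
      rw [Finset.mem_erase] at hx
      have := Finset.mem_Icc.mp (hS.1 hx.2)
      rw [Finset.mem_Icc]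
      have := hx.1
      omega
    · intro S hS S' hS' he
      rw [Finset.mem_filter, Finset.mem_powerset] at hS hS'
      have hmem : n ∈ S ↔ n ∈ S' := by
        constructor <;> intro h <;> by_contra h'
        · have c1 := Finset.card_erase_of_mem h
          have c2 : S'.erase n = S' := Finset.erase_eq_of_notMem h'
          rw [c2] at he
          rw [he] at c1
          obtain ⟨m1, hm1⟩ := hS.2
          obtain ⟨m2, hm2⟩ := hS'.2
          have := Finset.card_pos.mpr ⟨n, h⟩
          omega
        · have c1 := Finset.card_erase_of_mem h
          have c2 : S.erase n = S := Finset.erase_eq_of_notMem h'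
          rw [c2] at he
          rw [← he] at c1
          obtain ⟨m1, hm1⟩ := hS.2
          obtain ⟨m2, hm2⟩ := hS'.2
          have := Finset.card_pos.mpr ⟨n, h⟩
          omega
      ext x
      by_cases hx : x = n
      · subst hx; exact hmem
      · constructor <;> intro h
        · have : x ∈ S.erase n := Finset.mem_erase.mpr ⟨hx, h⟩
          rw [he] at this
          exact (Finset.mem_erase.mp this).2
        · have : x ∈ S'.erase n := Finset.mem_erase.mpr ⟨hx, h⟩
          rw [← he] at this
          exact (Finset.mem_erase.mp this).2
    · intro T hT
      rw [Finset.mem_powerset] at hT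
      have hnT : n ∉ T := by
        intro h
        have := Finset.mem_Icc.mp (hT h)
        omega
      have hTn : T ⊆ Finset.Icc 1 n := by
        intro x hx
        have := Finset.mem_Icc.mp (hT hx)
        rw [Finset.mem_Icc]
        omega
      by_cases he : Even T.card
      · exact ⟨T, Finset.mem_filter.mpr ⟨Finset.mem_powerset.mpr hTn, he⟩,
          Finset.erase_eq_of_notMem hnT⟩
      · refine ⟨insert n T, Finset.mem_filter.mpr ⟨Finset.mem_powerset.mpr ?_, ?_⟩,
          Finset.erase_insert hnT⟩
        · exact Finset.insert_subset (Finset.mem_Icc.mpr ⟨hn, le_rfl⟩) hTn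
        · rw [Finset.card_insert_of_notMem hnT]
          rcases Nat.even_or_odd T.card with h | h
          · exact absurd h he
          · obtain ⟨m, hm⟩ := h
            exact ⟨m + 1, by omega⟩
  rw [key, Finset.card_powerset, Nat.card_Icc]
  congr 1

/-- ∑_{i=0}^{⌊n/2⌋} C(n,2i) = 2^{n−1} for n ≥ 1: the total number of antichains
in the poset {(x,y) : 1 ≤ y ≤ x ≤ n−1} under componentwise order is 2^{n−1}. -/
theorem total_antichains_triangle (n : ℕ) (hn : 1 ≤ n) :
    (∑ i ∈ Finset.range (n / 2 + 1), n.choose (2 * i)) = 2 ^ (n - 1) ∧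
    ((trianglePoset n).powerset.filter IsLatticeAntichain).card = 2 ^ (n - 1) := by
  exact ⟨even_choose_sum n hn, (antichain_card_eq n hn).trans (even_subsets_card n hn)⟩
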